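/- If f < n/2 and q ≤ n−f, then the Multi-Krum*_q aggregation rule is an (f, λ)-resilient averaging rule with λ = (1 + √((n−f)/(n−2f))) · min{1, (n−q)/(n−f)}. -/

import Mathlib

/-- Diameter of the family `x` over the index set `S`. -/
noncomputable def diam {n d : ℕ} (x : Fin n → EuclideanSpace ℝ (Fin d))
    (S : Finset (Fin n)) : ℝ :=
  (((S ×ˢ S).sup fun p => ‖x p.1 - x p.2‖₊ : NNReal) : ℝ)

lemma aux_le_diam {n d : ℕ} (x : Fin n → EuclideanSpace ℝ (Fin d)) {S : Finset (Fin n)}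
    {i j : Fin n} (hi : i ∈ S) (hj : j ∈ S) : ‖x i - x j‖ ≤ diam x S := by
  have h : ‖x i - x j‖₊ ≤ (S ×ˢ S).sup fun p => ‖x p.1 - x p.2‖₊ :=
    Finset.le_sup (s := S ×ˢ S) (f := fun p => ‖x p.1 - x p.2‖₊) (b := (i, j))
      (Finset.mem_product.mpr ⟨hi, hj⟩)
  exact_mod_cast h

lemma aux_diam_nonneg {n d : ℕ} (x : Fin n → EuclideanSpace ℝ (Fin d))
    (S : Finset (Fin n)) : 0 ≤ diam x S := NNReal.coe_nonneg _

/-- If `A` and `B` have the same cardinality and every value on `A` is at most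
every value on `B \ A`, then the sum over `A` is at most the sum over `B`. -/
lemma aux_sum_le_sum {α : Type*} [DecidableEq α] (A B : Finset α) (g : α → ℝ)
    (hcard : A.card = B.card)
    (h : ∀ a ∈ A, ∀ b ∈ B, b ∉ A → g a ≤ g b) :
    ∑ i ∈ A, g i ≤ ∑ i ∈ B, g i := by
  have h1 : ∑ i ∈ A ∩ B, g i + ∑ i ∈ A \ B, g i = ∑ i ∈ A, g i :=
    Finset.sum_inter_add_sum_sdiff A B g
  have h2 : ∑ i ∈ B ∩ A, g i + ∑ i ∈ B \ A, g i = ∑ i ∈ B, g i :=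
    Finset.sum_inter_add_sum_sdiff B A g
  rw [Finset.inter_comm] at h2
  have hc1 := Finset.card_sdiff_add_card_inter A B
  have hc2 := Finset.card_sdiff_add_card_inter B A
  rw [Finset.inter_comm B A] at hc2
  have hc : (A \ B).card = (B \ A).card := by omega
  have key : ∑ i ∈ A \ B, g i ≤ ∑ i ∈ B \ A, g i := by
    rcases (B \ A).eq_empty_or_nonempty with he | hne
    · have hA : (A \ B) = ∅ := Finset.card_eq_zero.mp (by rw [hc, he]; simp)
      simp [hA, he]
    · obtain ⟨b0, hb0, hb0min⟩ := Finset.exists_min_image (B \ A) g hne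
      have hb0B : b0 ∈ B := (Finset.mem_sdiff.mp hb0).1
      have hb0A : b0 ∉ A := (Finset.mem_sdiff.mp hb0).2
      calc ∑ i ∈ A \ B, g i ≤ ∑ _i ∈ A \ B, g b0 := by
            refine Finset.sum_le_sum fun a ha => ?_
            exact h a (Finset.mem_sdiff.mp ha).1 b0 hb0B hb0A
        _ = ((A \ B).card : ℝ) * g b0 := by
            rw [Finset.sum_const, nsmul_eq_mul]
        _ = ((B \ A).card : ℝ) * g b0 := by rw [hc]
        _ ≤ ∑ i ∈ B \ A, g i := by
            have := Finset.card_nsmul_le_sum (B \ A) g (g b0) (fun i hi => hb0min i hi)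
            simpa [nsmul_eq_mul] using this
  linarith

/-- Cauchy–Schwarz for norms of sums. -/
lemma aux_cs {α : Type*} {E : Type*} [NormedAddCommGroup E] (K : Finset α) (v : α → E) :
    ‖∑ i ∈ K, v i‖ ≤ Real.sqrt ((K.card : ℝ) * ∑ i ∈ K, ‖v i‖ ^ 2) := by
  have h2 : (∑ i ∈ K, ‖v i‖) ^ 2 ≤ (K.card : ℝ) * ∑ i ∈ K, ‖v i‖ ^ 2 := by
    exact_mod_cast sq_sum_le_card_mul_sum_sq (s := K) (f := fun i => ‖v i‖)
  calc ‖∑ i ∈ K, v i‖ ≤ ∑ i ∈ K, ‖v i‖ := norm_sum_le K v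
    _ = Real.sqrt ((∑ i ∈ K, ‖v i‖) ^ 2) :=
        (Real.sqrt_sq (Finset.sum_nonneg fun i _ => norm_nonneg _)).symm
    _ ≤ _ := Real.sqrt_le_sqrt h2

/-- Cancellation estimate: the deviation of a partial sum from the proportional
full sum is controlled by cross differences. -/
lemma aux_cancel {α : Type*} {E : Type*} [DecidableEq α] [NormedAddCommGroup E]
    [NormedSpace ℝ E] (x : α → E) (S T : Finset α) (hT : T ⊆ S) (D : ℝ)
    (hD : ∀ i ∈ S, ∀ j ∈ S, ‖x i - x j‖ ≤ D) :
    ‖(S.card : ℝ) • ∑ i ∈ T, x i - (T.card : ℝ) • ∑ i ∈ S, x i‖ ≤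
      (T.card : ℝ) * ((S \ T).card : ℝ) * D := by
  have hid : (S.card : ℝ) • ∑ i ∈ T, x i - (T.card : ℝ) • ∑ i ∈ S, x i
      = ∑ j ∈ T, ∑ l ∈ S \ T, (x j - x l) := by
    have e1 : ∀ j : α, ∑ l ∈ S \ T, (x j - x l)
        = ((S \ T).card : ℝ) • x j - ∑ l ∈ S \ T, x l := by
      intro j
      rw [Finset.sum_sub_distrib, Finset.sum_const, ← Nat.cast_smul_eq_nsmul ℝ]
    have hsd : ∑ l ∈ S \ T, x l = ∑ l ∈ S, x l - ∑ l ∈ T, x l := by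
      rw [eq_sub_iff_add_eq, Finset.sum_sdiff hT]
    have hcard : ((S \ T).card : ℝ) = (S.card : ℝ) - (T.card : ℝ) := by
      have h1 := Finset.card_sdiff_add_card_inter S T
      have h2 : S ∩ T = T := Finset.inter_eq_right.mpr hT
      rw [h2] at h1
      push_cast [← h1]
      ring
    rw [Finset.sum_congr rfl fun j _ => e1 j, Finset.sum_sub_distrib,
      Finset.sum_const, ← Nat.cast_smul_eq_nsmul ℝ T.card, ← Finset.smul_sum,
      hsd, hcard]
    module
  rw [hid]
  calc ‖∑ j ∈ T, ∑ l ∈ S \ T, (x j - x l)‖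
      ≤ ∑ j ∈ T, ‖∑ l ∈ S \ T, (x j - x l)‖ := norm_sum_le _ _
    _ ≤ ∑ _j ∈ T, (((S \ T).card : ℝ) * D) := by
        refine Finset.sum_le_sum fun j hj => ?_
        calc ‖∑ l ∈ S \ T, (x j - x l)‖ ≤ ∑ l ∈ S \ T, ‖x j - x l‖ := norm_sum_le _ _
          _ ≤ ∑ _l ∈ S \ T, D := by
              refine Finset.sum_le_sum fun l hl => ?_
              exact hD j (hT hj) l (Finset.mem_sdiff.mp hl).1
          _ = ((S \ T).card : ℝ) * D := by rw [Finset.sum_const, nsmul_eq_mul]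
    _ = (T.card : ℝ) * (((S \ T).card : ℝ) * D) := by rw [Finset.sum_const, nsmul_eq_mul]
    _ = (T.card : ℝ) * ((S \ T).card : ℝ) * D := by ring

set_option maxHeartbeats 2000000 in
/-- Multi-Krum*_q is `(f, (1+√((n-f)/(n-2f)))·min{1,(n-q)/(n-f)})`-resilient averaging. -/
theorem multikrum_resilient (n f q d : ℕ) (hfn : 2 * f < n) (hq1 : 1 ≤ q) (hq : q ≤ n - f)
    (x : Fin n → EuclideanSpace ℝ (Fin d))
    (C : Fin n → Finset (Fin n))
    (hCi : ∀ i, i ∉ C i) (hCcard : ∀ i, (C i).card = n - f - 1)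
    (hCclose : ∀ i : Fin n, ∀ j ∈ C i, ∀ l : Fin n, l ∉ C i → l ≠ i →
      ‖x i - x j‖ ≤ ‖x i - x l‖)
    (M : Finset (Fin n)) (hM : M.card = q)
    (hMmin : ∀ i ∈ M, ∀ j : Fin n, j ∉ M →
      (∑ j' ∈ C i, ‖x i - x j'‖ ^ 2) ≤ ∑ j' ∈ C j, ‖x j - x j'‖ ^ 2)
    (S : Finset (Fin n)) (hS : S.card = n - f) :
    ‖((q : ℝ)⁻¹ • ∑ i ∈ M, x i) - (S.card : ℝ)⁻¹ • ∑ i ∈ S, x i‖ ≤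
      (1 + Real.sqrt (((n : ℝ) - f) / ((n : ℝ) - 2 * f))) *
        min 1 (((n : ℝ) - q) / ((n : ℝ) - f)) * diam x S := by
  classical
  set D := diam x S with hDdef
  have hD : ∀ i ∈ S, ∀ j ∈ S, ‖x i - x j‖ ≤ D := fun i hi j hj => aux_le_diam x hi hj
  have hD0 : 0 ≤ D := aux_diam_nonneg x S
  set u := Real.sqrt (((n : ℝ) - f) / ((n : ℝ) - 2 * f)) with hudef
  have hu0 : 0 ≤ u := Real.sqrt_nonneg _
  have hfn' : f ≤ n := by omega
  have hmf1 : (1 : ℝ) ≤ (n : ℝ) - 2 * f := by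
    have h0 : (2 * f + 1 : ℕ) ≤ n := hfn
    have h1 : ((2 * f + 1 : ℕ) : ℝ) ≤ (n : ℝ) := by exact_mod_cast h0
    push_cast at h1
    linarith
  have hScard : (S.card : ℝ) = (n : ℝ) - f := by
    rw [hS, Nat.cast_sub hfn']
  have hu2 : u ^ 2 = ((n : ℝ) - f) / ((n : ℝ) - 2 * f) := by
    rw [hudef]
    exact Real.sq_sqrt (div_nonneg (by linarith) (by linarith))
  have hScompl : (Sᶜ : Finset (Fin n)).card = f := by
    rw [Finset.card_compl, hS, Fintype.card_fin]
    omega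
  -- key per-point estimate for points of `M` outside `S`
  have key : ∀ i ∈ M, i ∉ S →
      ‖(S.card : ℝ) • x i - ∑ j ∈ S, x j‖ ≤ (u * ((n : ℝ) - f) + f) * D := by
    intro i hiM hiS
    rcases Nat.eq_zero_or_pos f with hfz | hfpos
    · exfalso
      have hSuniv : S = Finset.univ := Finset.eq_univ_of_card S
        (by rw [hS, hfz, Fintype.card_fin]; omega)
      exact hiS (by rw [hSuniv]; exact Finset.mem_univ i)
    -- find an honest index outside M
    have hSM : (S \ M).Nonempty := by
      have h1 : S ∩ M ⊆ M.erase i := by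
        intro j hj
        rcases Finset.mem_inter.mp hj with ⟨hjS, hjM⟩
        exact Finset.mem_erase.mpr ⟨fun h => hiS (h ▸ hjS), hjM⟩
      have h2 : (S ∩ M).card ≤ q - 1 := by
        have := Finset.card_le_card h1
        rw [Finset.card_erase_of_mem hiM, hM] at this
        exact this
      have h3 := Finset.card_sdiff_add_card_inter S M
      rw [hS] at h3
      rw [← Finset.card_pos]
      omega
    obtain ⟨j0, hj0⟩ := hSM
    have hj0S : j0 ∈ S := (Finset.mem_sdiff.mp hj0).1
    have hj0M : j0 ∉ M := (Finset.mem_sdiff.mp hj0).2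
    -- score bound
    have hcast1 : ((n - f - 1 : ℕ) : ℝ) = (n : ℝ) - f - 1 := by
      have h1 : f + 1 ≤ n := by omega
      rw [Nat.sub_sub, Nat.cast_sub h1]
      push_cast
      ring
    have hscore : ∑ j' ∈ C i, ‖x i - x j'‖ ^ 2 ≤ ((n : ℝ) - f - 1) * D ^ 2 := by
      calc ∑ j' ∈ C i, ‖x i - x j'‖ ^ 2
          ≤ ∑ j' ∈ C j0, ‖x j0 - x j'‖ ^ 2 := hMmin i hiM j0 hj0M
        _ ≤ ∑ j' ∈ S.erase j0, ‖x j0 - x j'‖ ^ 2 := by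
            refine aux_sum_le_sum _ _ _ ?_ ?_
            · rw [hCcard j0, Finset.card_erase_of_mem hj0S, hS]
            · intro a ha b hb hbC
              have hbj0 : b ≠ j0 := (Finset.mem_erase.mp hb).1
              exact pow_le_pow_left₀ (norm_nonneg _) (hCclose j0 a ha b hbC hbj0) 2
        _ ≤ ∑ _j' ∈ S.erase j0, D ^ 2 := by
            refine Finset.sum_le_sum fun l hl => ?_
            exact pow_le_pow_left₀ (norm_nonneg _) (hD j0 hj0S l (Finset.mem_of_mem_erase hl)) 2
        _ = ((n - f - 1 : ℕ) : ℝ) * D ^ 2 := by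
            rw [Finset.sum_const, nsmul_eq_mul, Finset.card_erase_of_mem hj0S, hS]
        _ = ((n : ℝ) - f - 1) * D ^ 2 := by rw [hcast1]
    -- the good neighborhood
    set K := C i ∩ S with hKdef
    have hKS : K ⊆ S := Finset.inter_subset_right
    have hKC : K ⊆ C i := Finset.inter_subset_left
    have hkcard : n - 2 * f ≤ K.card := by
      have h1 : C i \ S ⊆ (Sᶜ).erase i := by
        intro j hj
        rcases Finset.mem_sdiff.mp hj with ⟨hjC, hjS⟩
        refine Finset.mem_erase.mpr ⟨fun h => hCi i (h ▸ hjC), Finset.mem_compl.mpr hjS⟩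
      have h2 : (C i \ S).card ≤ f - 1 := by
        have := Finset.card_le_card h1
        rwa [Finset.card_erase_of_mem (Finset.mem_compl.mpr hiS), hScompl] at this
      have h3 := Finset.card_sdiff_add_card_inter (C i) S
      rw [hCcard i] at h3
      rw [← hKdef] at h3
      omega
    have hk1 : 1 ≤ K.card := by omega
    have hkR : (0 : ℝ) < (K.card : ℝ) := by exact_mod_cast hk1
    have hkge : ((n : ℝ) - 2 * f) ≤ (K.card : ℝ) := by
      have : ((n - 2 * f : ℕ) : ℝ) ≤ (K.card : ℝ) := by exact_mod_cast hkcard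
      rwa [Nat.cast_sub (by omega), Nat.cast_mul, Nat.cast_ofNat] at this
    -- Cauchy–Schwarz estimate
    have hA : ‖(K.card : ℝ) • x i - ∑ j ∈ K, x j‖ ≤ (K.card : ℝ) * u * D := by
      have hid : (K.card : ℝ) • x i - ∑ j ∈ K, x j = ∑ j ∈ K, (x i - x j) := by
        rw [Finset.sum_sub_distrib, Finset.sum_const, Nat.cast_smul_eq_nsmul]
      rw [hid]
      have hsum : ∑ j ∈ K, ‖x i - x j‖ ^ 2 ≤ ((n : ℝ) - f - 1) * D ^ 2 := by
        refine le_trans ?_ hscore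
        exact Finset.sum_le_sum_of_subset_of_nonneg hKC fun j _ _ => by positivity
      have hmono : (K.card : ℝ) * ∑ j ∈ K, ‖x i - x j‖ ^ 2
          ≤ ((K.card : ℝ) * u * D) ^ 2 := by
        have hle : ((n : ℝ) - f - 1) ≤ (K.card : ℝ) * u ^ 2 := by
          rw [hu2]
          have e : ((n : ℝ) - 2 * f) * (((n : ℝ) - f) / ((n : ℝ) - 2 * f))
              = (n : ℝ) - f := by
            field_simp
          have hd0 : (0:ℝ) ≤ ((n : ℝ) - f) / ((n : ℝ) - 2 * f) :=
            div_nonneg (by linarith) (by linarith)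
          nlinarith [mul_le_mul_of_nonneg_right hkge hd0, e]
        calc (K.card : ℝ) * ∑ j ∈ K, ‖x i - x j‖ ^ 2
            ≤ (K.card : ℝ) * (((n : ℝ) - f - 1) * D ^ 2) := by
              exact mul_le_mul_of_nonneg_left hsum (le_of_lt hkR)
          _ ≤ (K.card : ℝ) * ((K.card : ℝ) * u ^ 2 * D ^ 2) := by
              have : ((n : ℝ) - f - 1) * D ^ 2 ≤ (K.card : ℝ) * u ^ 2 * D ^ 2 := by
                nlinarith [sq_nonneg D]
              exact mul_le_mul_of_nonneg_left this (le_of_lt hkR)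
          _ = ((K.card : ℝ) * u * D) ^ 2 := by ring
      calc ‖∑ j ∈ K, (x i - x j)‖
          ≤ Real.sqrt ((K.card : ℝ) * ∑ j ∈ K, ‖x i - x j‖ ^ 2) := aux_cs K _
        _ ≤ Real.sqrt (((K.card : ℝ) * u * D) ^ 2) := Real.sqrt_le_sqrt hmono
        _ = (K.card : ℝ) * u * D := Real.sqrt_sq (by positivity)
    -- averaging estimate
    have hB : ‖(S.card : ℝ) • ∑ j ∈ K, x j - (K.card : ℝ) • ∑ j ∈ S, x j‖ ≤
        (K.card : ℝ) * f * D := by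
      refine le_trans (aux_cancel x S K hKS D hD) ?_
      have hSK : ((S \ K).card : ℝ) ≤ (f : ℝ) := by
        have h5 : (S \ K).card + (S ∩ K).card = S.card := Finset.card_sdiff_add_card_inter S K
        have h6 : S ∩ K = K := Finset.inter_eq_right.mpr hKS
        rw [h6, hS] at h5
        have : (S \ K).card ≤ f := by omega
        exact_mod_cast this
      have := mul_le_mul_of_nonneg_left hSK (le_of_lt hkR)
      nlinarith
    -- combine
    have hid2 : (K.card : ℝ) • ((S.card : ℝ) • x i - ∑ j ∈ S, x j)
        = (S.card : ℝ) • ((K.card : ℝ) • x i - ∑ j ∈ K, x j)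
          + ((S.card : ℝ) • ∑ j ∈ K, x j - (K.card : ℝ) • ∑ j ∈ S, x j) := by
      rw [smul_sub, smul_sub, smul_smul, smul_smul, mul_comm]
      abel
    have hnorm : (K.card : ℝ) * ‖(S.card : ℝ) • x i - ∑ j ∈ S, x j‖
        ≤ (K.card : ℝ) * ((u * ((n : ℝ) - f) + f) * D) := by
      have h7 : ‖(K.card : ℝ) • ((S.card : ℝ) • x i - ∑ j ∈ S, x j)‖
          ≤ (S.card : ℝ) * ((K.card : ℝ) * u * D) + (K.card : ℝ) * f * D := by
        rw [hid2]
        refine le_trans (norm_add_le _ _) ?_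
        have h8 : ‖(S.card : ℝ) • ((K.card : ℝ) • x i - ∑ j ∈ K, x j)‖
            ≤ (S.card : ℝ) * ((K.card : ℝ) * u * D) := by
          rw [norm_smul, Real.norm_of_nonneg (by positivity)]
          refine mul_le_mul_of_nonneg_left hA (by positivity)
        linarith [hB]
      rw [norm_smul, Real.norm_of_nonneg (le_of_lt hkR)] at h7
      refine le_trans h7 ?_
      rw [hScard]
      ring_nf
      nlinarith [hkR]
    exact le_of_mul_le_mul_left hnorm hkR
  -- main decomposition
  set A := M ∩ S with hAdef
  set B := M \ S with hBdef
  have hab : A.card + B.card = q := by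
    rw [hAdef, hBdef, Finset.card_inter_add_card_sdiff, hM]
  have hbf : B.card ≤ f := by
    have h1 : B ⊆ Sᶜ := fun j hj => Finset.mem_compl.mpr (Finset.mem_sdiff.mp hj).2
    have := Finset.card_le_card h1
    rwa [hScompl] at this
  have hApos : A ⊆ S := Finset.inter_subset_right
  -- the scaled difference
  have hQpos : (0 : ℝ) < (q : ℝ) := by exact_mod_cast hq1
  have hmpos : (0 : ℝ) < (S.card : ℝ) := by
    rw [hScard]; have : (f : ℝ) ≥ 0 := by positivity
    have h2 : ((2 * f : ℕ) : ℝ) < (n : ℝ) := by exact_mod_cast hfn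
    push_cast at h2
    linarith
  have hgoal0 : ((q : ℝ)⁻¹ • ∑ i ∈ M, x i) - (S.card : ℝ)⁻¹ • ∑ i ∈ S, x i
      = ((q : ℝ) * (S.card : ℝ))⁻¹ •
        ((S.card : ℝ) • ∑ i ∈ M, x i - (q : ℝ) • ∑ i ∈ S, x i) := by
    rw [smul_sub, smul_smul, smul_smul]
    have e1 : ((q : ℝ) * (S.card : ℝ))⁻¹ * (S.card : ℝ) = (q : ℝ)⁻¹ := by
      rw [mul_inv, mul_assoc, inv_mul_cancel₀ (ne_of_gt hmpos), mul_one]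
    have e2 : ((q : ℝ) * (S.card : ℝ))⁻¹ * (q : ℝ) = (S.card : ℝ)⁻¹ := by
      rw [mul_inv, mul_comm ((q:ℝ))⁻¹, mul_assoc, inv_mul_cancel₀ (ne_of_gt hQpos), mul_one]
    rw [e1, e2]
  have hsplitM : ∑ i ∈ M, x i = ∑ i ∈ A, x i + ∑ i ∈ B, x i :=
    (Finset.sum_inter_add_sum_sdiff M S x).symm
  have hVid : (S.card : ℝ) • ∑ i ∈ M, x i - (q : ℝ) • ∑ i ∈ S, x i
      = ((S.card : ℝ) • ∑ i ∈ A, x i - (A.card : ℝ) • ∑ i ∈ S, x i)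
        + ∑ i ∈ B, ((S.card : ℝ) • x i - ∑ j ∈ S, x j) := by
    rw [hsplitM, Finset.sum_sub_distrib, Finset.sum_const, ← Finset.smul_sum,
      ← Nat.cast_smul_eq_nsmul ℝ B.card]
    have hqcast : (q : ℝ) = (A.card : ℝ) + (B.card : ℝ) := by exact_mod_cast hab.symm
    rw [hqcast]
    module
  have hW1 : ‖(S.card : ℝ) • ∑ i ∈ A, x i - (A.card : ℝ) • ∑ i ∈ S, x i‖
      ≤ (A.card : ℝ) * ((S.card : ℝ) - (A.card : ℝ)) * D := by
    refine le_trans (aux_cancel x S A hApos D hD) ?_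
    have h5 : (S \ A).card + (S ∩ A).card = S.card := Finset.card_sdiff_add_card_inter S A
    have h6 : S ∩ A = A := Finset.inter_eq_right.mpr hApos
    rw [h6] at h5
    have h7 : ((S \ A).card : ℝ) = (S.card : ℝ) - (A.card : ℝ) := by
      push_cast [← h5]; ring
    rw [h7]
  have hW2 : ‖∑ i ∈ B, ((S.card : ℝ) • x i - ∑ j ∈ S, x j)‖
      ≤ (B.card : ℝ) * ((u * ((n : ℝ) - f) + f) * D) := by
    refine le_trans (norm_sum_le _ _) ?_
    have := Finset.sum_le_sum (f := fun i => ‖(S.card : ℝ) • x i - ∑ j ∈ S, x j‖)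
      (g := fun _ => (u * ((n : ℝ) - f) + f) * D)
      (fun i hi => key i (Finset.mem_sdiff.mp hi).1 (Finset.mem_sdiff.mp hi).2)
    simpa [Finset.sum_const, nsmul_eq_mul] using this
  have hV : ‖(S.card : ℝ) • ∑ i ∈ M, x i - (q : ℝ) • ∑ i ∈ S, x i‖
      ≤ ((A.card : ℝ) * (((n:ℝ) - f) - (A.card : ℝ))
          + (B.card : ℝ) * (u * ((n : ℝ) - f) + f)) * D := by
    rw [hVid]
    refine le_trans (norm_add_le _ _) ?_
    rw [hScard] at hW1 hW2 ⊢
    nlinarith [hW1, hW2]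
  -- final arithmetic
  rw [hgoal0, norm_smul, Real.norm_of_nonneg (by positivity)]
  rw [inv_mul_le_iff₀ (by positivity)]
  refine le_trans hV ?_
  -- real abbreviations and numeric facts
  have haR0 : (0 : ℝ) ≤ (A.card : ℝ) := by positivity
  have hbR0 : (0 : ℝ) ≤ (B.card : ℝ) := by positivity
  have habR : (A.card : ℝ) + (B.card : ℝ) = (q : ℝ) := by exact_mod_cast hab
  have hbfR : (B.card : ℝ) ≤ (f : ℝ) := by exact_mod_cast hbf
  have hbqR : (B.card : ℝ) ≤ (q : ℝ) := by
    have : B.card ≤ q := by omega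
    exact_mod_cast this
  have hQm : (q : ℝ) ≤ (n : ℝ) - f := by
    have h1 : ((q : ℕ) : ℝ) ≤ ((n - f : ℕ) : ℝ) := by exact_mod_cast hq
    rwa [Nat.cast_sub hfn'] at h1
  have hf0 : (0 : ℝ) ≤ (f : ℝ) := by positivity
  rcases min_cases (1 : ℝ) (((n : ℝ) - q) / ((n : ℝ) - f)) with ⟨hmin, _⟩ | ⟨hmin, hlt⟩
  · rw [hmin, hScard, ← habR]
    nlinarith [mul_nonneg (mul_nonneg hbR0 (by linarith : (0:ℝ) ≤ ((n:ℝ) - f) - f)) hD0,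
      mul_nonneg (mul_self_nonneg ((A.card : ℝ))) hD0,
      mul_nonneg (mul_nonneg (mul_nonneg hu0
        (by linarith : (0:ℝ) ≤ (n:ℝ) - f)) haR0) hD0]
  · rw [hmin, hScard, ← habR]
    have hmne : ((n : ℝ) - f) ≠ 0 := by
      rw [← hScard]; exact ne_of_gt hmpos
    have hrw : ((A.card : ℝ) + (B.card : ℝ)) * ((n : ℝ) - f) *
        ((1 + u) * (((n : ℝ) - ((A.card : ℝ) + (B.card : ℝ))) / ((n : ℝ) - f)) * D)
        = (1 + u) * ((A.card : ℝ) + (B.card : ℝ)) *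
          ((n : ℝ) - ((A.card : ℝ) + (B.card : ℝ))) * D := by
      field_simp
    rw [hrw]
    have hABm : (A.card : ℝ) + (B.card : ℝ) ≤ (n : ℝ) - f := by
      rw [habR]; exact hQm
    nlinarith [mul_nonneg (mul_nonneg haR0
        (by linarith : (0:ℝ) ≤ (f:ℝ) - (B.card:ℝ))) hD0,
      mul_nonneg (mul_nonneg (mul_nonneg hu0
        (by linarith : (0:ℝ) ≤ ((n:ℝ) - f) - ((A.card:ℝ) + (B.card:ℝ)))) haR0) hD0,
      mul_nonneg (mul_nonneg (mul_nonneg hu0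
        (by linarith : (0:ℝ) ≤ (A.card:ℝ) + (B.card:ℝ)))
        (by linarith : (0:ℝ) ≤ (f:ℝ) - (B.card:ℝ))) hD0,
      mul_nonneg (mul_nonneg hbR0
        (by linarith : (0:ℝ) ≤ ((n:ℝ) - f) - ((A.card:ℝ) + (B.card:ℝ)))) hD0]
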